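/- Let G be a graph of order n having the totally disconnected graph tK_1 as a star complement for an eigenvalue λ with λ ≠ −1 (i.e., there is a λ-star set X with G − X ≅ tK_1 and λ ∉ σ(tK_1)). Then λ is a main eigenvalue of G, and moreover for every v ∈ X, λ is a main eigenvalue of the subgraph induced by X̄ ∪ {v}; hence ℵ_max(λ, G) = n − t. -/
import Mathlib


open Matrix

noncomputable def eigSpace {m : Type*} [Fintype m] [DecidableEq m]
    (A : Matrix m m ℝ) (lam : ℝ) : Submodule ℝ (m → ℝ) :=
  LinearMap.ker (Matrix.mulVecLin (A - lam • (1 : Matrix m m ℝ)))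

/-- `lam` is an eigenvalue of the real matrix `A`. -/
def IsEig {m : Type*} [Fintype m] [DecidableEq m] (A : Matrix m m ℝ) (lam : ℝ) : Prop :=
  eigSpace A lam ≠ ⊥

/-- The multiplicity of `lam` as an eigenvalue of `A`. -/
noncomputable def multE {m : Type*} [Fintype m] [DecidableEq m]
    (A : Matrix m m ℝ) (lam : ℝ) : ℕ :=
  Module.finrank ℝ (eigSpace A lam)

/-- `lam` is a main eigenvalue of `A`: its eigenspace is not orthogonal to the all-ones
vector. -/
def IsMainEig {m : Type*} [Fintype m] [DecidableEq m] (A : Matrix m m ℝ) (lam : ℝ) : Prop :=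
  ∃ x ∈ eigSpace A lam, ∑ i, x i ≠ 0

/-- The adjacency matrix of the subgraph of `G` induced by the vertex set `S`. -/
def indMatrix {n : ℕ} (G : SimpleGraph (Fin n)) [DecidableRel G.Adj] (S : Finset (Fin n)) :
    Matrix S S ℝ :=
  (G.adjMatrix ℝ).submatrix (fun i => (i : Fin n)) (fun j => (j : Fin n))

/-- `X` is a `lam`-star set of `G`: its cardinality equals the multiplicity of `lam`
and `lam` is not an eigenvalue of the subgraph induced by the complement of `X`. -/
def IsStarSet {n : ℕ} (G : SimpleGraph (Fin n)) [DecidableRel G.Adj] (lam : ℝ)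
    (X : Finset (Fin n)) : Prop :=
  X.card = multE (G.adjMatrix ℝ) lam ∧ ¬ IsEig (indMatrix G Xᶜ) lam

/-- The block `N` of the adjacency matrix: rows indexed by `Xᶜ`, columns by `X`. -/
def Nmat {n : ℕ} (G : SimpleGraph (Fin n)) [DecidableRel G.Adj] (X : Finset (Fin n)) :
    Matrix ↥(Xᶜ) ↥X ℝ :=
  (G.adjMatrix ℝ).submatrix (fun i => (i : Fin n)) (fun j => (j : Fin n))

/-- The block `C` of the adjacency matrix: the adjacency matrix of `G - X`. -/
def Cmat {n : ℕ} (G : SimpleGraph (Fin n)) [DecidableRel G.Adj] (X : Finset (Fin n)) :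
    Matrix ↥(Xᶜ) ↥(Xᶜ) ℝ :=
  indMatrix G Xᶜ

/-- The set of lam-main vertices of a lam-star set X: those v ∈ X for which lam is a
main eigenvalue of the subgraph induced by Xᶜ ∪ {v}. -/
def mainVerts {n : ℕ} (G : SimpleGraph (Fin n)) [DecidableRel G.Adj] (lam : ℝ)
    (X : Finset (Fin n)) : Set (Fin n) :=
  {v : Fin n | v ∈ X ∧ IsMainEig (indMatrix G (insert v Xᶜ)) lam}

/-- The maximum number of lam-main vertices over all lam-star sets of G. -/
noncomputable def alephMax {n : ℕ} (G : SimpleGraph (Fin n)) [DecidableRel G.Adj]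
    (lam : ℝ) : ℕ :=
  sSup {p : ℕ | ∃ X : Finset (Fin n), IsStarSet G lam X ∧ (mainVerts G lam X).ncard = p}

lemma mem_eigSpace_iff {m : Type*} [Fintype m] [DecidableEq m] (A : Matrix m m ℝ) (lam : ℝ)
    (x : m → ℝ) : x ∈ eigSpace A lam ↔ ∀ i, ∑ j, A i j * x j = lam * x i := by
  unfold eigSpace
  rw [LinearMap.mem_ker, funext_iff]
  refine forall_congr' fun i => ?_
  simp [Matrix.mulVecLin_apply, Matrix.mulVec, dotProduct, Matrix.sub_apply,
    Matrix.smul_apply, Matrix.one_apply, sub_mul, Finset.sum_sub_distrib,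
    mul_ite, ite_mul, mul_one, mul_zero, zero_mul, Finset.sum_ite_eq, sub_eq_zero,
    smul_eq_mul]

theorem stmt17 {n t : ℕ} (G : SimpleGraph (Fin n)) [DecidableRel G.Adj] (lam : ℝ)
    (hiso : ∀ v : Fin n, ∃ u, G.Adj v u)
    (hlam : IsEig (G.adjMatrix ℝ) lam) (hne : lam ≠ -1)
    (X : Finset (Fin n)) (hX : IsStarSet G lam X)
    (ht : Xᶜ.card = t)
    (hempty : ∀ u ∈ Xᶜ, ∀ v ∈ Xᶜ, ¬ G.Adj u v) :
    IsMainEig (G.adjMatrix ℝ) lam ∧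
    (∀ v ∈ X, IsMainEig (indMatrix G (insert v Xᶜ)) lam) ∧
    alephMax G lam = n - t := by
  classical
  obtain ⟨hcard, hnotC⟩ := hX
  set A := G.adjMatrix ℝ with hA
  have hAapp : ∀ i j, A i j = if G.Adj i j then 1 else 0 := fun i j => by
    simp [hA]
  -- n ≠ 0
  have hn0 : n ≠ 0 := by
    intro h
    subst h
    apply hlam
    rw [Submodule.eq_bot_iff]
    intro x _
    funext i
    exact i.elim0
  -- Xᶜ is nonempty
  have hXc : Xᶜ.Nonempty := by
    rw [Finset.nonempty_iff_ne_empty]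
    intro h
    have hXuniv : X = Finset.univ := by
      rwa [Finset.compl_eq_empty_iff] at h
    have hE : eigSpace A lam = ⊤ := by
      apply Submodule.eq_top_of_finrank_eq
      have h1 : Module.finrank ℝ (eigSpace A lam) = X.card := hcard.symm
      rw [h1, hXuniv, Finset.card_univ, Fintype.card_fin, Module.finrank_pi, Fintype.card_fin]
    set v0 : Fin n := ⟨0, Nat.pos_of_ne_zero hn0⟩
    have h1 : (Pi.single v0 1 : Fin n → ℝ) ∈ eigSpace A lam := hE ▸ Submodule.mem_top
    rw [mem_eigSpace_iff] at h1
    have hsingle : ∀ i : Fin n, ∑ j, A i j * (Pi.single v0 1 : Fin n → ℝ) j = A i v0 := by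
      intro i
      rw [Finset.sum_eq_single v0]
      · simp
      · intro j _ hj
        rw [Pi.single_apply, if_neg hj, mul_zero]
      · intro h; exact absurd (Finset.mem_univ v0) h
    obtain ⟨u, hu⟩ := hiso v0
    have hlz : lam = 0 := by
      have h3 := h1 v0
      rw [hsingle v0] at h3
      have := h3; simp [hAapp] at this; linarith
    have h2 := h1 u
    rw [hsingle u, hlz, zero_mul] at h2
    have : G.Adj u v0 := hu.symm
    rw [hAapp] at h2
    simp [this] at h2
  -- lam ≠ 0
  have hlam0 : lam ≠ 0 := by
    intro h
    subst h
    apply hnotC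
    obtain ⟨u0, hu0⟩ := hXc
    intro hbot
    have hone : (fun _ => (1 : ℝ)) ∈ eigSpace (indMatrix G Xᶜ) 0 := by
      rw [mem_eigSpace_iff]
      intro i
      rw [zero_mul]
      apply Finset.sum_eq_zero
      intro j _
      have hna : ¬ G.Adj (i : Fin n) (j : Fin n) := hempty _ i.2 _ j.2
      simp [indMatrix, hna]
    rw [hbot, Submodule.mem_bot] at hone
    have := congrFun hone ⟨u0, hu0⟩
    norm_num at this
  -- the restriction map to X coordinates
  let f : eigSpace A lam →ₗ[ℝ] (↥X → ℝ) :=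
    (LinearMap.funLeft ℝ ℝ (fun i : ↥X => (i : Fin n))).comp (eigSpace A lam).subtype
  have hfapp : ∀ (x : eigSpace A lam) (w : ↥X), f x w = (x : Fin n → ℝ) w := fun _ _ => rfl
  have hfinj : Function.Injective f := by
    rw [injective_iff_map_eq_zero]
    rintro ⟨x, hx⟩ hfx
    have hX0 : ∀ w ∈ X, x w = 0 := fun w hw => congrFun hfx ⟨w, hw⟩
    have heq := (mem_eigSpace_iff A lam x).mp hx
    have hall : ∀ i, x i = 0 := by
      intro i
      by_cases hi : i ∈ X
      · exact hX0 i hi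
      · have hi' : i ∈ Xᶜ := Finset.mem_compl.mpr hi
        have h1 := heq i
        have h2 : ∑ j, A i j * x j = 0 := by
          apply Finset.sum_eq_zero
          intro j _
          by_cases hj : j ∈ X
          · rw [hX0 j hj, mul_zero]
          · have hna : ¬ G.Adj i j := hempty i hi' j (Finset.mem_compl.mpr hj)
            simp [hAapp, hna]
        rw [h2] at h1
        exact (mul_eq_zero.mp h1.symm).resolve_left hlam0
    exact Subtype.ext (funext hall)
  have hfsurj : Function.Surjective f := by
    have h1 : Module.finrank ℝ (eigSpace A lam) = Module.finrank ℝ (↥X → ℝ) := by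
      have h2 : Module.finrank ℝ (eigSpace A lam) = X.card := hcard.symm
      rw [h2, Module.finrank_pi, Fintype.card_coe]
    exact (LinearMap.injective_iff_surjective_of_finrank_eq_finrank h1).mp hfinj
  -- key eigenvector existence
  have key : ∀ v ∈ X, ∃ x ∈ eigSpace A lam,
      x v = 1 ∧ (∀ w ∈ X, w ≠ v → x w = 0) ∧ ∑ u ∈ Xᶜ, x u = lam := by
    intro v hv
    obtain ⟨⟨x, hx⟩, hfx⟩ := hfsurj (Pi.single ⟨v, hv⟩ 1)
    have hXval : ∀ w, ∀ hw : w ∈ X, x w = if w = v then 1 else 0 := by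
      intro w hw
      have h1 : x w = (Pi.single (⟨v, hv⟩ : ↥X) 1 : ↥X → ℝ) ⟨w, hw⟩ := congrFun hfx ⟨w, hw⟩
      rw [h1, Pi.single_apply]
      by_cases h : w = v
      · subst h; simp
      · rw [if_neg (by simpa [Subtype.ext_iff] using h), if_neg h]
    have hv1 : x v = 1 := by rw [hXval v hv, if_pos rfl]
    have hx0 : ∀ w ∈ X, w ≠ v → x w = 0 := fun w hw hwv => by
      rw [hXval w hw, if_neg hwv]
    have heq := (mem_eigSpace_iff A lam x).mp hx
    have hcol : ∀ u ∈ Xᶜ, lam * x u = A u v := by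
      intro u hu
      rw [← heq u]
      rw [Finset.sum_eq_single v]
      · rw [hv1, mul_one]
      · intro j _ hj
        by_cases hjX : j ∈ X
        · rw [hx0 j hjX hj, mul_zero]
        · have hna : ¬ G.Adj u j := hempty u hu j (Finset.mem_compl.mpr hjX)
          simp [hAapp, hna]
      · intro h; exact absurd (Finset.mem_univ v) h
    have hrowv : lam = ∑ u ∈ Xᶜ, A v u * x u := by
      have h1 := heq v
      rw [hv1, mul_one] at h1
      rw [← h1, ← Finset.sum_add_sum_compl X (fun j => A v j * x j)]
      have hzero : ∑ w ∈ X, A v w * x w = 0 := by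
        apply Finset.sum_eq_zero
        intro w hw
        by_cases hwv : w = v
        · subst hwv; simp [hAapp]
        · rw [hx0 w hw hwv, mul_zero]
      rw [hzero, zero_add]
    have hsum : ∑ u ∈ Xᶜ, x u = lam := by
      have h2 : lam * ∑ u ∈ Xᶜ, x u = lam * lam := by
        rw [Finset.mul_sum]
        calc ∑ u ∈ Xᶜ, lam * x u
            = ∑ u ∈ Xᶜ, A u v := Finset.sum_congr rfl hcol
          _ = ∑ u ∈ Xᶜ, A v u * A u v := Finset.sum_congr rfl (fun u _ => by
              by_cases h : G.Adj v u
              · simp [hAapp, h, h.symm]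
              · have h' : ¬ G.Adj u v := fun hh => h hh.symm
                simp [hAapp, h, h'])
          _ = ∑ u ∈ Xᶜ, A v u * (lam * x u) :=
              Finset.sum_congr rfl (fun u hu => by rw [hcol u hu])
          _ = lam * ∑ u ∈ Xᶜ, A v u * x u := by
              rw [Finset.mul_sum]
              exact Finset.sum_congr rfl fun u _ => by ring
          _ = lam * lam := by rw [← hrowv]
      exact mul_left_cancel₀ hlam0 h2
    exact ⟨x, hx, hv1, hx0, hsum⟩
  -- X is nonempty
  have hXne : X.Nonempty := by
    rw [← Finset.card_pos, hcard]
    have hnt : Nontrivial (eigSpace A lam) := by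
      rcases (Submodule.ne_bot_iff _).mp hlam with ⟨x, hx, hx0⟩
      exact nontrivial_of_ne ⟨x, hx⟩ 0 (by simpa [Subtype.ext_iff] using hx0)
    exact Module.finrank_pos
  -- part 1
  obtain ⟨v₀, hv₀⟩ := hXne
  have main1 : IsMainEig A lam := by
    obtain ⟨x, hx, hx1, hx0, hxs⟩ := key v₀ hv₀
    refine ⟨x, hx, ?_⟩
    rw [← Finset.sum_add_sum_compl X x]
    have hXsum : ∑ w ∈ X, x w = 1 := by
      rw [Finset.sum_eq_single v₀]
      · exact hx1
      · intro w hw hwv; exact hx0 w hw hwv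
      · intro h; exact absurd hv₀ h
    rw [hXsum, hxs]
    intro h; apply hne; linarith
  -- part 2
  have main2 : ∀ v ∈ X, IsMainEig (indMatrix G (insert v Xᶜ)) lam := by
    intro v hv
    obtain ⟨x, hx, hx1, hx0, hxs⟩ := key v hv
    have hvnc : v ∉ Xᶜ := by rw [Finset.mem_compl]; exact fun h => h hv
    have heq := (mem_eigSpace_iff A lam x).mp hx
    refine ⟨fun w => x w, ?_, ?_⟩
    · rw [mem_eigSpace_iff]
      intro i
      calc ∑ j : ↥(insert v Xᶜ), indMatrix G (insert v Xᶜ) i j * x ↑j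
          = ∑ w ∈ insert v Xᶜ, A ↑i w * x w := by
            rw [← Finset.sum_coe_sort (insert v Xᶜ) (fun w => A (↑i) w * x w)]
            exact Finset.sum_congr rfl fun j _ => by simp [indMatrix, hA]
        _ = ∑ w, A ↑i w * x w := by
            apply Finset.sum_subset (Finset.subset_univ _)
            intro w _ hw
            have hwX : w ∈ X := by
              by_contra h
              exact hw (Finset.mem_insert_of_mem (Finset.mem_compl.mpr h))
            have hwv : w ≠ v := fun h => hw (h ▸ Finset.mem_insert_self v Xᶜ)
            rw [hx0 w hwX hwv, mul_zero]
        _ = lam * x ↑i := heq ↑i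
    · have hs : ∑ j : ↥(insert v Xᶜ), x ↑j = ∑ w ∈ insert v Xᶜ, x w :=
        Finset.sum_coe_sort (insert v Xᶜ) (fun w => x w)
      rw [hs, Finset.sum_insert hvnc, hx1, hxs]
      intro h; apply hne; linarith
  -- part 3
  have hXcard : X.card = n - t := by
    have hcc := Finset.card_add_card_compl X
    rw [ht, Fintype.card_fin] at hcc
    omega
  have hmainset : mainVerts G lam X = ↑X := by
    ext w
    simp only [mainVerts, Set.mem_setOf_eq, Finset.mem_coe]
    exact ⟨fun h => h.1, fun h => ⟨h, main2 w h⟩⟩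
  have hmem : X.card ∈
      {p : ℕ | ∃ X' : Finset (Fin n), IsStarSet G lam X' ∧ (mainVerts G lam X').ncard = p} :=
    ⟨X, ⟨hcard, hnotC⟩, by rw [hmainset, Set.ncard_coe_finset]⟩
  have hub : ∀ p ∈
      {p : ℕ | ∃ X' : Finset (Fin n), IsStarSet G lam X' ∧ (mainVerts G lam X').ncard = p},
      p ≤ X.card := by
    rintro p ⟨X', hX', hp⟩
    have h1 : mainVerts G lam X' ⊆ ↑X' := fun w hw => hw.1
    have h2 : (mainVerts G lam X').ncard ≤ X'.card := by
      rw [← Set.ncard_coe_finset X']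
      exact Set.ncard_le_ncard h1 (Set.toFinite _)
    have h3 : X'.card = X.card := by rw [hX'.1, hcard]
    omega
  refine ⟨main1, main2, ?_⟩
  rw [← hXcard]
  exact le_antisymm (csSup_le ⟨X.card, hmem⟩ hub) (le_csSup ⟨X.card, hub⟩ hmem)
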